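/- For every n ≥ 2 and every subset A ⊆ {1, …, n−1}, the vector v_A is a lecture hall partition and satisfies (v_A)_n − (v_A)_{n−1} = 1. -/

import Mathlib

/-- A lecture hall partition of length `n`: a vector `λ ∈ ℤⁿ` (indexed `0,…,n-1`,
corresponding to `λ_1,…,λ_n`) with `0 ≤ λ_1` and `i·λ_{i+1} ≥ (i+1)·λ_i` for `1 ≤ i ≤ n-1`. -/
def IsLectureHall (n : ℕ) (l : Fin n → ℤ) : Prop :=
  (∀ h : 0 < n, 0 ≤ l ⟨0, h⟩) ∧
  ∀ i : ℕ, ∀ h : i + 1 < n,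
    ((i : ℤ) + 1) * l ⟨i + 1, h⟩ ≥ ((i : ℤ) + 2) * l ⟨i, by omega⟩

/-- For a subset `A = {i_1 < i_2 < ⋯ < i_k} ⊆ {1,…,n-1}`, the vector
`v_A = (0,…,0, i_1, i_2, …, i_k, i_k + 1) ∈ ℤⁿ`: `n - k - 1` leading zeros, then the
elements of `A` in increasing order, and finally `max(A) + 1` (with `v_∅ = (0,…,0,1)`). -/
def vA (n : ℕ) (A : Finset ℕ) : Fin n → ℤ := fun j =>
  if (j : ℕ) = n - 1 then ((A.sort (· ≤ ·)).getLastD 0 : ℤ) + 1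
  else if n - 1 - A.card ≤ (j : ℕ) then
    (((A.sort (· ≤ ·)).getD ((j : ℕ) - (n - 1 - A.card)) 0 : ℕ) : ℤ)
  else 0

/-!
With `i_1 < ⋯ < i_k` the elements of `A` and `i_{k+1} := i_k + 1`, the vector `v_A` is the
strictly increasing sequence `i_1, …, i_{k+1}` of numbers `≤ n`, padded with zeros on the left.
Strict increase gives `λ_j ≤ j` at every position `j`, and then `λ_{j+1} ≥ λ_j + 1` yields
`j λ_{j+1} ≥ j λ_j + j ≥ (j + 1) λ_j`. The last two entries are `i_k + 1` and `i_k` (or `1` and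
`0` when `A = ∅`).
-/

theorem List.SortedLT.getElem_add_sub_le_getElem {l : List ℕ} (hl : l.SortedLT) {i j : ℕ}
    (hij : i ≤ j) (hj : j < l.length) : l[i] + (j - i) ≤ l[j] := by
  induction j, hij using Nat.le_induction with
  | base => simp
  | succ j hij ih =>
    have hlt : l[j] < l[j + 1] := (hl.getElem_lt_getElem_iff).2 (Nat.lt_succ_self j)
    have := ih (by omega)
    omega

theorem List.sortedLT_append_getLastD_succ {l : List ℕ} (hl : l.SortedLT) :
    (l ++ [l.getLastD 0 + 1]).SortedLT := by
  obtain rfl | ⟨l', x, rfl⟩ := l.eq_nil_or_concat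
  · simp [List.sortedLT_iff_pairwise]
  simp only [List.concat_eq_append, List.getLastD_concat, List.sortedLT_iff_pairwise,
    List.pairwise_append, List.mem_append, List.mem_singleton] at hl ⊢
  grind

theorem List.getD_leftpad {α : Type*} (n : ℕ) (a : α) (l : List α) (j : ℕ) :
    (l.leftpad n a).getD j a = if n - l.length ≤ j then l.getD (j - (n - l.length)) a else a := by
  unfold List.leftpad
  split_ifs with h
  · rw [List.getD_append_right _ _ _ _ (by simpa using h), List.length_replicate]
  · rw [List.getD_append _ _ _ _ (by simp; omega), List.getD_replicate _ (by omega)]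

theorem List.getLastD_le {α : Type*} [LE α] {l : List α} {d b : α} (hd : d ≤ b)
    (h : ∀ x ∈ l, x ≤ b) : l.getLastD d ≤ b := by
  obtain rfl | ⟨l', x, rfl⟩ := l.eq_nil_or_concat
  · exact hd
  · simpa using h x (by simp)

theorem List.getD_length_sub_one_eq_getLastD {α : Type*} (l : List α) (d : α) :
    l.getD (l.length - 1) d = l.getLastD d := by
  obtain rfl | ⟨l', x, rfl⟩ := l.eq_nil_or_concat <;> simp

theorem isLectureHall_of_le_succ {n : ℕ} {l : Fin n → ℤ} (h0 : ∀ j, 0 ≤ l j)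
    (hle : ∀ j : Fin n, l j ≤ j + 1)
    (hstep : ∀ i (h : i + 1 < n),
      l ⟨i, by omega⟩ = 0 ∨ l ⟨i, by omega⟩ < l ⟨i + 1, h⟩) :
    IsLectureHall n l := by
  refine ⟨fun h => h0 _, fun i h => ?_⟩
  have hi := hle ⟨i, by omega⟩
  have hi' := h0 ⟨i + 1, h⟩
  rcases hstep i h with hz | hlt
  · rw [hz]; nlinarith
  · push_cast at hi; nlinarith

def leftpadVec (n : ℕ) (l : List ℕ) : Fin n → ℤ := fun j => ((l.leftpad n 0).getD j 0 : ℤ)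

theorem leftpadVec_apply (n : ℕ) (l : List ℕ) (j : Fin n) :
    leftpadVec n l j = if n - l.length ≤ j then (l.getD (j - (n - l.length)) 0 : ℤ) else 0 := by
  rw [leftpadVec, List.getD_leftpad]
  split_ifs <;> rfl

theorem isLectureHall_leftpadVec {n : ℕ} {l : List ℕ} (hl : l.SortedLT)
    (hle : ∀ x ∈ l, x ≤ n) :
    IsLectureHall n (leftpadVec n l) := by
  set p := n - l.length
  have hentry : ∀ j : ℕ, p ≤ j → j < n → j - p < l.length := fun j _ _ => by omega
  refine isLectureHall_of_le_succ (fun j => by rw [leftpadVec]; positivity) (fun j => ?_)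
    (fun i h => ?_)
  · rw [leftpadVec_apply]
    split_ifs with hj
    · have hm := hentry j hj j.2
      rw [List.getD_eq_getElem _ _ hm]
      have hgap := hl.getElem_add_sub_le_getElem (Nat.le_sub_one_of_lt hm) (by omega)
      have hlast := hle _ (List.getElem_mem (l := l) (n := l.length - 1) (by omega))
      omega
    · positivity
  · simp only [leftpadVec_apply]
    by_cases hi : p ≤ i
    · right
      rw [if_pos hi, if_pos (by omega), List.getD_eq_getElem _ _ (hentry i hi (by omega)),
        List.getD_eq_getElem _ _ (hentry (i + 1) (by omega) h)]
      exact_mod_cast hl.getElem_lt_getElem_iff.2 (by omega)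
    · exact .inl (if_neg hi)

theorem vA_eq_leftpadVec {n : ℕ} {A : Finset ℕ} (hA : A.card < n) :
    vA n A = leftpadVec n (A.sort ++ [A.sort.getLastD 0 + 1]) := by
  funext j
  have hlen := A.length_sort (· ≤ ·)
  rw [leftpadVec_apply, List.length_append, List.length_singleton, hlen, vA]
  split_ifs with h1 h2 h3 h3
  · rw [List.getD_append_right _ _ _ _ (by omega), hlen,
      show j - (n - (A.card + 1)) - A.card = 0 by omega]
    simp
  · omega
  · rw [List.getD_append _ _ _ _ (by omega),
      show j - (n - (A.card + 1)) = j - (n - 1 - A.card) by omega]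
  · omega
  · omega
  · rfl

theorem vA_penultimate {n : ℕ} (hn : 2 ≤ n) {A : Finset ℕ} (hA : A.card < n) :
    vA n A ⟨n - 2, by omega⟩ = A.sort.getLastD 0 := by
  rw [vA, if_neg (by simp; omega), ← List.getD_length_sub_one_eq_getLastD _ 0, A.length_sort]
  split_ifs with h <;> simp only at h
  · rw [show n - 2 - (n - 1 - A.card) = A.card - 1 by omega]
  · rw [(Finset.card_eq_zero (s := A)).1 (by omega)]
    simp

/-- For every `n ≥ 2` and every `A ⊆ {1,…,n-1}`, the vector `v_A` is a lecture hall
partition with `(v_A)_n - (v_A)_{n-1} = 1`. -/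
theorem vA_isLectureHall_degree_one (n : ℕ) (hn : 2 ≤ n) (A : Finset ℕ)
    (hA : A ⊆ Finset.Icc 1 (n - 1)) :
    IsLectureHall n (vA n A) ∧
      vA n A ⟨n - 1, by omega⟩ - vA n A ⟨n - 2, by omega⟩ = 1 := by
  have hcard : A.card < n := by
    have := Finset.card_le_card hA
    rw [Nat.card_Icc] at this
    omega
  have hsort : ∀ x ∈ A.sort, x ≤ n - 1 := fun x hx =>
    (Finset.mem_Icc.1 (hA ((A.mem_sort _).1 hx))).2
  refine ⟨?_, ?_⟩
  · rw [vA_eq_leftpadVec hcard]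
    refine isLectureHall_leftpadVec (List.sortedLT_append_getLastD_succ A.sortedLT_sort) ?_
    have hlast := List.getLastD_le (Nat.zero_le _) hsort
    simp only [List.mem_append, List.mem_singleton]
    rintro x (hx | rfl)
    · exact (hsort x hx).trans (Nat.sub_le n 1)
    · omega
  · rw [vA_penultimate hn hcard, vA, if_pos rfl]
    ring
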